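/- arXiv:2402.08651 — 6 statements merged into one kernel-verified Lean document; each statement's English description precedes it below -/
import Mathlib

section
/- Let P be a finite poset containing two incomparable elements a, b such that a and b are each strictly smaller than every element of P ∖ {a, b}. Then for every n ∈ ℕ, sat*(n, P) ≥ n + 1. -/
open Finset

/-- A family of finite sets contains an induced copy of the poset `P`. -/
def ContainsIndCopy (P : Type*) [PartialOrder P] (F : Finset (Finset ℕ)) : Prop :=
  ∃ f : P → Finset ℕ, Function.Injective f ∧ (∀ p, f p ∈ F) ∧
    ∀ p q : P, p ≤ q ↔ f p ⊆ f q

/-- `F ⊆ 2^[n]` is induced `P`-saturated. -/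
def IsIndPSaturated (n : ℕ) (P : Type*) [PartialOrder P] (F : Finset (Finset ℕ)) : Prop :=
  (∀ A ∈ F, A ⊆ Finset.Icc 1 n) ∧
  ¬ ContainsIndCopy P F ∧
  ∀ G ⊆ Finset.Icc 1 n, G ∉ F → ContainsIndCopy P (insert G F)

/-- `sat*(n, P)`: minimum size of an induced `P`-saturated family in `2^[n]`. -/
noncomputable def satStarP (n : ℕ) (P : Type*) [PartialOrder P] : ℕ :=
  sInf {m | ∃ F : Finset (Finset ℕ), IsIndPSaturated n P F ∧ F.card = m}

/-- `a` and `b` are legs of `P`: incomparable, and each strictly smaller than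
every element of `P \ {a, b}`. -/
def IsLegs (P : Type*) [PartialOrder P] (a b : P) : Prop :=
  ¬ a ≤ b ∧ ¬ b ≤ a ∧ ∀ c : P, c ≠ a → c ≠ b → a < c ∧ b < c

/-- `C ∈ F` is a partner of `x`: `{x}` and `C` form the legs of some induced
copy of `P` in `F ∪ {{x}}`. -/
def IsPartner (P : Type*) [PartialOrder P] (a b : P) (F : Finset (Finset ℕ))
    (x : ℕ) (C : Finset ℕ) : Prop :=
  C ∈ F ∧ ∃ f : P → Finset ℕ, Function.Injective f ∧
    (∀ p, f p ∈ insert ({x} : Finset ℕ) F) ∧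
    (∀ p q : P, p ≤ q ↔ f p ⊆ f q) ∧
    ({f a, f b} : Set (Finset ℕ)) = {({x} : Finset ℕ), C}

/-!
Every induced `P`-saturated family `F ⊆ 2^[n]` contains `∅`, since no element of `P` lies below
both legs. Moreover, for each `x ∈ [n]` it contains some `A` and `A ∪ {x}` with `x ∉ A`. Otherwise
start from `C = ∅`: adding `C ∪ {x}` to `F` creates an induced copy of `P`. In it `C ∪ {x}` cannot
be an upper element (its two legs would fit under the upper part of the previous copy, which lies
above `C ∪ {x}`, giving a copy inside `F`), so it is a leg, and the other leg is a set `C' ⊋ C` of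
`F` avoiding `x` whose upper part lies above `C' ∪ {x}`. Iterating, the sets `C` grow forever.
Hence the indicator vectors of the sets in `F ∖ {∅}` span `ℚ^n`, as `1_{A ∪ {x}} - 1_A = e_x`, and
`|F| ≥ n + 1`.
-/

namespace IsLegs

variable {P : Type*} [PartialOrder P] {a b : P}

theorem symm (h : IsLegs P a b) : IsLegs P b a :=
  ⟨h.2.1, h.1, fun c hca hcb => (h.2.2 c hcb hca).symm⟩

theorem ne (h : IsLegs P a b) : a ≠ b := fun e => h.1 (e ▸ le_rfl)

theorem eq_or_eq_or_lt (h : IsLegs P a b) (q : P) : q = a ∨ q = b ∨ a < q ∧ b < q := by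
  by_cases hqa : q = a
  · exact .inl hqa
  by_cases hqb : q = b
  · exact .inr (.inl hqb)
  exact .inr (.inr (h.2.2 q hqa hqb))

theorem not_le_of_le (h : IsLegs P a b) {p : P} (hpa : p ≤ a) : ¬ p ≤ b := by
  intro hpb
  rcases h.eq_or_eq_or_lt p with rfl | rfl | ⟨hap, -⟩
  · exact h.1 hpb
  · exact h.2.1 hpa
  · exact hap.not_ge hpa

end IsLegs

theorem Finset.card_le_card_erase_empty_of_forall_exists_insert {α : Type*} [DecidableEq α]
    {F : Finset (Finset α)} {s : Finset α} (h : ∀ x ∈ s, ∃ A ∈ F, x ∉ A ∧ insert x A ∈ F) :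
    s.card ≤ (F.erase ∅).card := by
  let v : Finset α → s → ℚ := fun A i => if (i : α) ∈ A then 1 else 0
  let V : Submodule ℚ (s → ℚ) := Submodule.span ℚ ((F.erase ∅).image v : Set (s → ℚ))
  have hv : ∀ A ∈ F, v A ∈ V := by
    intro A hA
    by_cases hA0 : A = ∅
    · have : v A = 0 := by ext; simp [v, hA0]
      exact this ▸ V.zero_mem
    · exact Submodule.subset_span (mem_image_of_mem v (mem_erase.2 ⟨hA0, hA⟩))
  have hsingle : ∀ i : s, Pi.single i 1 ∈ V := by
    intro i
    obtain ⟨A, hA, hiA, hiA'⟩ := h i i.2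
    have : Pi.single i 1 = v (insert (i : α) A) - v A := by
      ext j
      by_cases hji : j = i
      · subst hji; simp [v, hiA]
      · simp [v, hji]
    exact this ▸ V.sub_mem (hv _ hiA') (hv A hA)
  have hV : V = ⊤ := by
    refine eq_top_iff.2 ((Pi.basisFun ℚ s).span_eq.symm.le.trans (Submodule.span_le.2 ?_))
    rintro _ ⟨i, rfl⟩
    simpa using hsingle i
  calc s.card = Module.finrank ℚ V := by rw [hV, finrank_top]; simp
    _ ≤ ((F.erase ∅).image v).card := finrank_span_finset_le_card _
    _ ≤ (F.erase ∅).card := card_image_le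

section Saturated

variable {P : Type*} [PartialOrder P] {a b : P} {F : Finset (Finset ℕ)}

theorem containsIndCopy_iff :
    ContainsIndCopy P F ↔ ∃ f : P ↪o Finset ℕ, ∀ p, f p ∈ F := by
  constructor
  · rintro ⟨f, -, hF, hf⟩
    exact ⟨OrderEmbedding.ofMapLEIff f fun p q => (hf p q).symm, hF⟩
  · rintro ⟨f, hF⟩
    exact ⟨f, f.injective, hF, fun p q => f.le_iff_le.symm⟩

theorem exists_eq_of_containsIndCopy_insert {G : Finset ℕ} (hF : ¬ ContainsIndCopy P F)
    (hG : ContainsIndCopy P (insert G F)) :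
    ∃ f : P ↪o Finset ℕ, ∃ p, f p = G ∧ ∀ q ≠ p, f q ∈ F := by
  obtain ⟨f, hf⟩ := containsIndCopy_iff.1 hG
  obtain ⟨p, hp⟩ : ∃ p, f p = G := by
    by_contra! hne
    exact hF (containsIndCopy_iff.2 ⟨f, fun q => (mem_insert.1 (hf q)).resolve_left (hne q)⟩)
  refine ⟨f, p, hp, fun q hqp => (mem_insert.1 (hf q)).resolve_left fun hq => hqp ?_⟩
  exact f.injective (hq.trans hp.symm)

theorem containsIndCopy_of_legs (hP : IsLegs P a b) {A B : Finset ℕ} (g : P ↪o Finset ℕ)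
    (hA : A ∈ F) (hB : B ∈ F) (hAB : ¬ A ⊆ B) (hBA : ¬ B ⊆ A)
    (hg : ∀ q, q ≠ a → q ≠ b → g q ∈ F ∧ A ⊂ g q ∧ B ⊂ g q) : ContainsIndCopy P F := by
  classical
  let h : P → Finset ℕ := fun q => if q = a then A else if q = b then B else g q
  have ha : h a = A := if_pos rfl
  have hb : h b = B := by simp [h, hP.ne.symm]
  have hu : ∀ q, a < q → b < q → h q = g q := fun q haq hbq => by simp [h, haq.ne', hbq.ne']
  have hA' : ∀ q, a < q → b < q → A ⊂ g q := fun q haq hbq => (hg q haq.ne' hbq.ne').2.1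
  have hB' : ∀ q, a < q → b < q → B ⊂ g q := fun q haq hbq => (hg q haq.ne' hbq.ne').2.2
  have hle : ∀ r s, h r ≤ h s ↔ r ≤ s := by
    intro r s
    rcases hP.eq_or_eq_or_lt r with rfl | rfl | ⟨har, hbr⟩ <;>
    rcases hP.eq_or_eq_or_lt s with rfl | rfl | ⟨has, hbs⟩
    all_goals first
      | exact iff_of_true le_rfl le_rfl
      | rw [ha, hb]; exact iff_of_false hAB hP.1
      | rw [hb, ha]; exact iff_of_false hBA hP.2.1
      | rw [ha, hu s has hbs]; exact iff_of_true (hA' s has hbs).le has.le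
      | rw [hb, hu s has hbs]; exact iff_of_true (hB' s has hbs).le hbs.le
      | rw [hu r har hbr, ha]; exact iff_of_false (hA' r har hbr).not_subset har.not_ge
      | rw [hu r har hbr, hb]; exact iff_of_false (hB' r har hbr).not_subset hbr.not_ge
      | rw [hu r har hbr, hu s has hbs]; exact g.le_iff_le
  refine containsIndCopy_iff.2 ⟨OrderEmbedding.ofMapLEIff h hle, fun q => ?_⟩
  change h q ∈ F
  rcases hP.eq_or_eq_or_lt q with rfl | rfl | ⟨haq, hbq⟩
  · rwa [ha]
  · rwa [hb]
  · rw [hu q haq hbq]; exact (hg q haq.ne' hbq.ne').1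

def HasUpperPartAbove (a b : P) (F : Finset (Finset ℕ)) (D : Finset ℕ) : Prop :=
  ∃ g : P ↪o Finset ℕ, ∀ q, q ≠ a → q ≠ b → g q ∈ F ∧ D ⊆ g q

theorem HasUpperPartAbove.symm {D : Finset ℕ} (h : HasUpperPartAbove a b F D) :
    HasUpperPartAbove b a F D :=
  let ⟨g, hg⟩ := h
  ⟨g, fun q hqb hqa => hg q hqa hqb⟩

theorem ssubset_partner_of_eq_leg (hP : IsLegs P a b) (hF : ¬ ContainsIndCopy P F)
    {C : Finset ℕ} {x : ℕ} (hC : C ∈ F) (f : P ↪o Finset ℕ)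
    (hfa : f a = insert x C) (hfF : ∀ q ≠ a, f q ∈ F) :
    C ⊂ f b ∧ x ∉ f b ∧ HasUpperPartAbove a b F (insert x (f b)) := by
  have hbF : f b ∈ F := hfF b hP.ne.symm
  have hGb : ¬ insert x C ⊆ f b := hfa ▸ fun h => hP.1 (f.le_iff_le.1 h)
  have hbG : ¬ f b ⊆ insert x C := hfa ▸ fun h => hP.2.1 (f.le_iff_le.1 h)
  have hGq : ∀ q, q ≠ a → q ≠ b → insert x C ⊂ f q := fun q hqa hqb =>
    hfa ▸ f.lt_iff_lt.2 (hP.2.2 q hqa hqb).1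
  have hbq : ∀ q, q ≠ a → q ≠ b → f b ⊂ f q := fun q hqa hqb =>
    f.lt_iff_lt.2 (hP.2.2 q hqa hqb).2
  -- if `C` and `f b` were incomparable, `C` could replace the leg `f a = C ∪ {x}`
  have hCb : C ⊆ f b := by
    by_contra hCb
    refine hF (containsIndCopy_of_legs hP f hC hbF hCb
      (fun h => hbG (h.trans (subset_insert x C))) fun q hqa hqb => ?_)
    exact ⟨hfF q hqa, (subset_insert x C).trans_ssubset (hGq q hqa hqb), hbq q hqa hqb⟩
  refine ⟨hCb.ssubset_of_not_subset fun h => hbG (h.trans (subset_insert x C)),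
    fun hx => hGb (insert_subset hx hCb), f, fun q hqa hqb => ⟨hfF q hqa, ?_⟩⟩
  exact insert_subset ((hGq q hqa hqb).subset (mem_insert_self x C)) (hbq q hqa hqb).subset

theorem exists_ssubset_of_containsIndCopy_insert (hP : IsLegs P a b) (hF : ¬ ContainsIndCopy P F)
    {C : Finset ℕ} {x : ℕ} (hC : C ∈ F)
    (hbase : C = ∅ ∨ HasUpperPartAbove a b F (insert x C))
    (hG : ContainsIndCopy P (insert (insert x C) F)) :
    ∃ C' ∈ F, C ⊂ C' ∧ x ∉ C' ∧ HasUpperPartAbove a b F (insert x C') := by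
  obtain ⟨f, p, hfp, hfF⟩ := exists_eq_of_containsIndCopy_insert hF hG
  rcases hP.eq_or_eq_or_lt p with rfl | rfl | ⟨hap, hbp⟩
  · exact ⟨f b, hfF b hP.ne.symm, ssubset_partner_of_eq_leg hP hF hC f hfp hfF⟩
  · obtain ⟨hCa, hxa, hup⟩ := ssubset_partner_of_eq_leg hP.symm hF hC f hfp hfF
    exact ⟨f a, hfF a hP.ne, hCa, hxa, hup.symm⟩
  · exfalso
    have hfa : f a ⊂ insert x C := hfp ▸ f.lt_iff_lt.2 hap
    have hfb : f b ⊂ insert x C := hfp ▸ f.lt_iff_lt.2 hbp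
    rcases hbase with rfl | ⟨g, hg⟩
    · rw [insert_empty, ssubset_singleton_iff] at hfa hfb
      exact hP.ne (f.injective (hfa.trans hfb.symm))
    -- the legs of `f`, below `insert x C`, fit under the upper part `g` lying above it
    · refine hF (containsIndCopy_of_legs hP g (hfF a hap.ne) (hfF b hbp.ne)
        (fun h => hP.1 (f.le_iff_le.1 h)) (fun h => hP.2.1 (f.le_iff_le.1 h)) fun q hqa hqb => ?_)
      obtain ⟨hgF, hGg⟩ := hg q hqa hqb
      exact ⟨hgF, hfa.trans_subset hGg, hfb.trans_subset hGg⟩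

variable {n : ℕ}

theorem IsIndPSaturated.empty_mem (hP : IsLegs P a b) (hsat : IsIndPSaturated n P F) : ∅ ∈ F := by
  by_contra h
  obtain ⟨f, p, hfp, -⟩ :=
    exists_eq_of_containsIndCopy_insert hsat.2.1 (hsat.2.2 ∅ (empty_subset _) h)
  have hp : ∀ q, p ≤ q := fun q => f.le_iff_le.1 (hfp ▸ empty_subset (f q))
  exact hP.not_le_of_le (hp a) (hp b)

theorem IsIndPSaturated.exists_insert_mem (hP : IsLegs P a b) (hsat : IsIndPSaturated n P F)
    {x : ℕ} (hx : x ∈ Icc 1 n) : ∃ A ∈ F, x ∉ A ∧ insert x A ∈ F := by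
  classical
  by_contra! hno
  let S := F.filter fun C => x ∉ C ∧ (C = ∅ ∨ HasUpperPartAbove a b F (insert x C))
  obtain ⟨C, hCS, hmax⟩ := exists_max_image S card
    ⟨∅, mem_filter.2 ⟨hsat.empty_mem hP, notMem_empty x, .inl rfl⟩⟩
  obtain ⟨hC, hxC, hbase⟩ := mem_filter.1 hCS
  obtain ⟨C', hC', hCC', hxC', hup⟩ := exists_ssubset_of_containsIndCopy_insert hP hsat.2.1 hC
    hbase (hsat.2.2 _ (insert_subset hx (hsat.1 C hC)) (hno C hC hxC))
  exact (card_lt_card hCC').not_ge (hmax C' (mem_filter.2 ⟨hC', hxC', .inr hup⟩))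

theorem IsIndPSaturated.succ_le_card (hP : IsLegs P a b) (hsat : IsIndPSaturated n P F) :
    n + 1 ≤ F.card := by
  have h := card_le_card_erase_empty_of_forall_exists_insert fun x hx =>
    hsat.exists_insert_mem hP hx
  rw [Nat.card_Icc, card_erase_of_mem (hsat.empty_mem hP)] at h
  have := card_pos.2 ⟨_, hsat.empty_mem hP⟩
  omega

end Saturated

theorem exists_isIndPSaturated (P : Type*) [PartialOrder P] [Nonempty P] (n : ℕ) :
    ∃ F, IsIndPSaturated n P F := by
  classical
  let S := (Icc 1 n).powerset.powerset.filter fun F => ¬ ContainsIndCopy P F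
  have hS : ∅ ∈ S := mem_filter.2 ⟨empty_mem_powerset _, fun ⟨f, _, hf, _⟩ =>
    notMem_empty _ (hf (Classical.arbitrary P))⟩
  obtain ⟨F, hFS, hmax⟩ := exists_max_image S card ⟨∅, hS⟩
  obtain ⟨hFn, hF⟩ := mem_filter.1 hFS
  refine ⟨F, fun A hA => mem_powerset.1 (mem_powerset.1 hFn hA), hF, fun G hG hGF => ?_⟩
  by_contra hGF'
  have := hmax (insert G F) (mem_filter.2
    ⟨mem_powerset.2 (insert_subset (mem_powerset.2 hG) (mem_powerset.1 hFn)), hGF'⟩)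
  rw [card_insert_of_notMem hGF] at this
  omega

theorem stmt2_general (P : Type*) [PartialOrder P] (a b : P)
    (hab : ¬ a ≤ b) (hba : ¬ b ≤ a)
    (hsmall : ∀ c : P, c ≠ a → c ≠ b → a < c ∧ b < c)
    (n : ℕ) : n + 1 ≤ satStarP n P := by
  have hP : IsLegs P a b := ⟨hab, hba, hsmall⟩
  have : Nonempty P := ⟨a⟩
  obtain ⟨F₀, hF₀⟩ := exists_isIndPSaturated P n
  exact le_csInf ⟨_, F₀, hF₀, rfl⟩ fun m ⟨F, hF, hm⟩ => hm ▸ hF.succ_le_card hP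

/-- If a finite poset `P` has two incomparable elements `a, b`
each strictly smaller than every element of `P \ {a,b}`, then `sat*(n,P) ≥ n+1`. -/
theorem stmt2 (P : Type*) [PartialOrder P] [Fintype P] (a b : P)
    (hab : ¬ a ≤ b) (hba : ¬ b ≤ a)
    (hsmall : ∀ c : P, c ≠ a → c ≠ b → a < c ∧ b < c)
    (n : ℕ) : n + 1 ≤ satStarP n P :=
  stmt2_general P a b hab hba hsmall n
end

section
/- Let n ∈ ℕ and A ⊆ B ⊆ [n]. Then there exist |B ∖ A| pairwise internally disjoint complete chains from A to B. -/
/-- `C` is a complete chain from `A` to `B`: totally ordered by inclusion,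
with minimum `A`, maximum `B`, and `|C| = |B \ A| + 1`. -/
def IsCompleteChain (A B : Finset ℕ) (C : Finset (Finset ℕ)) : Prop :=
  A ∈ C ∧ B ∈ C ∧ (∀ X ∈ C, A ⊆ X ∧ X ⊆ B) ∧
  (∀ X ∈ C, ∀ Y ∈ C, X ⊆ Y ∨ Y ⊆ X) ∧
  C.card = (B \ A).card + 1

/-- The first increment set of `L` (w.r.t. bottom `A`): the union of the sets in
`L` of size `|A| + 1`, minus `A`. -/
def firstIncrementSet (A : Finset ℕ) (L : Finset (Finset ℕ)) : Finset ℕ :=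
  ((L.filter fun X => X.card = A.card + 1).sup id) \ A

/-- The last increment set of `L` (w.r.t. top `B`): `B` minus the intersection of
the sets in `L` of size `|B| - 1`. -/
def lastIncrementSet (B : Finset ℕ) (L : Finset (Finset ℕ)) : Finset ℕ :=
  B.filter fun x => ∃ X ∈ L, X.card = B.card - 1 ∧ x ∉ X

/-- `L` is a union of `k` pairwise internally disjoint complete chains from `A` to `B`. -/
def IsLanternUnion (A B : Finset ℕ) (k : ℕ) (L : Finset (Finset ℕ)) : Prop :=
  ∃ C : Fin k → Finset (Finset ℕ),
    (∀ i, IsCompleteChain A B (C i)) ∧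
    (∀ i j, i ≠ j → C i ∩ C j = {A, B}) ∧
    L = Finset.univ.biUnion C

open Finset

/-!
Enumerate `B \ A` as `x₀, …, x_{m-1}` and let the `i`-th chain add these elements in the cyclic
order `xᵢ, x_{i+1}, …`, indices mod `m`. Its `k`-th set is `A` together with the cyclic interval of
length `k` starting at `i`. For `0 < k < m` such an interval determines its starting point, so two
different chains meet only in `A` and `B`.
-/

def cyclicInterval {m : ℕ} (i : Fin m) (k : ℕ) : Finset (Fin m) :=
  ({t | (t : ℕ) < k} : Finset (Fin m)).map (addLeftEmbedding i)

section CyclicInterval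

variable {m : ℕ}

lemma mem_cyclicInterval {i x : Fin m} {k : ℕ} :
    x ∈ cyclicInterval i k ↔ ∃ t : Fin m, (t : ℕ) < k ∧ i + t = x := by
  simp [cyclicInterval]

lemma card_cyclicInterval (i : Fin m) {k : ℕ} (hk : k ≤ m) : #(cyclicInterval i k) = k := by
  rw [cyclicInterval, card_map, Fin.card_filter_val_lt, min_eq_right hk]

lemma cyclicInterval_zero (i : Fin m) : cyclicInterval i 0 = ∅ := by
  simp [cyclicInterval]

lemma cyclicInterval_self (i : Fin m) : cyclicInterval i m = univ :=
  eq_univ_of_card _ (by rw [card_cyclicInterval i le_rfl, Fintype.card_fin])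

lemma monotone_cyclicInterval (i : Fin m) : Monotone (cyclicInterval i) := fun _ _ hkl =>
  map_subset_map.2 (monotone_filter_right _ fun _ _ ht => ht.trans_le hkl)

/-- `i - 1` lies outside `cyclicInterval i k`, while every other point of a cyclic interval has
its predecessor inside it. -/
lemma cyclicInterval_left_injective {k : ℕ} (hk0 : 0 < k) (hkm : k < m) :
    Function.Injective (cyclicInterval · k : Fin m → Finset (Fin m)) := by
  obtain ⟨m, rfl⟩ := Nat.exists_eq_add_one_of_ne_zero (hk0.trans hkm).ne'
  intro i j (hij : cyclicInterval i k = cyclicInterval j k)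
  have pred_not_mem : i - 1 ∉ cyclicInterval i k := by
    rintro hmem
    obtain ⟨t, htk, ht⟩ := mem_cyclicInterval.1 hmem
    rw [sub_eq_add_neg] at ht
    rw [add_left_cancel ht, Fin.coe_neg_one] at htk
    omega
  obtain ⟨t, htk, rfl⟩ := mem_cyclicInterval.1 (hij ▸ mem_cyclicInterval.2 ⟨0, hk0, add_zero i⟩ :
    i ∈ cyclicInterval j k)
  by_contra hne
  have ht0 : t ≠ 0 := by rintro rfl; simp at hne
  apply pred_not_mem
  rw [hij]
  exact mem_cyclicInterval.2 ⟨t - 1, by rw [Fin.val_sub_one_of_ne_zero ht0]; omega, by abel⟩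

end CyclicInterval

structure IsSaturatedPath {α : Type*} (A B : Finset α) (m : ℕ) (F : ℕ → Finset α) : Prop where
  monotone : Monotone F
  zero : F 0 = A
  last : F m = B
  card_eq : ∀ k ≤ m, #(F k) = #A + k

namespace IsSaturatedPath

variable {α : Type*} {A B : Finset α} {m : ℕ} {F G : ℕ → Finset α}

lemma eq_of_apply_eq (hF : IsSaturatedPath A B m F) (hG : IsSaturatedPath A B m G) {k l : ℕ}
    (hk : k ≤ m) (hl : l ≤ m) (h : F k = G l) : k = l := by
  have := hF.card_eq k hk
  rw [h, hG.card_eq l hl] at this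
  omega

lemma card_sdiff [DecidableEq α] (hF : IsSaturatedPath A B m F) : #(B \ A) = m := by
  have hAB : A ⊆ B := hF.zero ▸ hF.last ▸ hF.monotone (Nat.zero_le m)
  rw [card_sdiff_of_subset hAB, ← hF.last, hF.card_eq m le_rfl]
  omega

lemma image_inter_image [DecidableEq α] (hF : IsSaturatedPath A B m F)
    (hG : IsSaturatedPath A B m G) (hFG : ∀ k, 0 < k → k < m → F k ≠ G k) :
    (range (m + 1)).image F ∩ (range (m + 1)).image G = {A, B} := by
  ext X
  simp only [mem_inter, mem_image, mem_range, Nat.lt_succ_iff, mem_insert, mem_singleton]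
  constructor
  · rintro ⟨⟨k, hk, rfl⟩, l, hl, hGF⟩
    obtain rfl := hF.eq_of_apply_eq hG hk hl hGF.symm
    rcases Nat.eq_zero_or_pos k with rfl | hk0
    · exact Or.inl hF.zero
    rcases hk.lt_or_eq with hkm | rfl
    · exact absurd hGF.symm (hFG k hk0 hkm)
    · exact Or.inr hF.last
  · rintro (rfl | rfl)
    · exact ⟨⟨0, m.zero_le, hF.zero⟩, 0, m.zero_le, hG.zero⟩
    · exact ⟨⟨m, le_rfl, hF.last⟩, m, le_rfl, hG.last⟩

end IsSaturatedPath

lemma IsSaturatedPath.isCompleteChain {A B : Finset ℕ} {m : ℕ} {F : ℕ → Finset ℕ}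
    (hF : IsSaturatedPath A B m F) : IsCompleteChain A B ((range (m + 1)).image F) := by
  simp only [IsCompleteChain, mem_image, mem_range, Nat.lt_succ_iff]
  refine ⟨⟨0, m.zero_le, hF.zero⟩, ⟨m, le_rfl, hF.last⟩, ?_, ?_, ?_⟩
  · rintro _ ⟨k, hk, rfl⟩
    exact ⟨hF.zero ▸ hF.monotone k.zero_le, hF.last ▸ hF.monotone hk⟩
  · rintro _ ⟨k, -, rfl⟩ _ ⟨l, -, rfl⟩
    exact (le_total k l).imp (hF.monotone ·) (hF.monotone ·)
  · rw [card_image_of_injOn, card_range, hF.card_sdiff]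
    intro k hk l hl
    exact hF.eq_of_apply_eq hF (mem_range_succ_iff.1 hk) (mem_range_succ_iff.1 hl)

section RotationPath

variable {α : Type*} [DecidableEq α] {m : ℕ}

def rotationPath (A : Finset α) (e : Fin m ↪ α) (i : Fin m) (k : ℕ) : Finset α :=
  A ∪ (cyclicInterval i k).map e

variable {A B : Finset α} {e : Fin m ↪ α}

lemma disjoint_map_cyclicInterval (he : univ.map e = B \ A) (i : Fin m) (k : ℕ) :
    Disjoint A ((cyclicInterval i k).map e) :=
  disjoint_sdiff.mono_right ((map_subset_map.2 (subset_univ _)).trans he.le)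

lemma isSaturatedPath_rotationPath (hAB : A ⊆ B) (he : univ.map e = B \ A) (i : Fin m) :
    IsSaturatedPath A B m (rotationPath A e i) where
  monotone _ _ hkl :=
    union_subset_union subset_rfl (map_subset_map.2 (monotone_cyclicInterval i hkl))
  zero := by simp [rotationPath, cyclicInterval_zero]
  last := by rw [rotationPath, cyclicInterval_self, he, union_sdiff_of_subset hAB]
  card_eq k hk := by
    rw [rotationPath, card_union_of_disjoint (disjoint_map_cyclicInterval he i k), card_map,
      card_cyclicInterval i hk]

lemma cyclicInterval_eq_of_rotationPath_eq (he : univ.map e = B \ A) {i j : Fin m} {k : ℕ}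
    (h : rotationPath A e i k = rotationPath A e j k) : cyclicInterval i k = cyclicInterval j k := by
  rw [← map_inj (f := e), ← union_sdiff_cancel_left (disjoint_map_cyclicInterval he i k),
    ← union_sdiff_cancel_left (disjoint_map_cyclicInterval he j k)]
  exact congrArg (· \ A) h

end RotationPath

theorem stmt3_general (A B : Finset ℕ) (hAB : A ⊆ B) :
    ∃ C : Fin (B \ A).card → Finset (Finset ℕ),
      (∀ i, IsCompleteChain A B (C i)) ∧
      (∀ i j, i ≠ j → C i ∩ C j = {A, B}) := by
  have he := map_orderEmbOfFin_univ (B \ A) rfl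
  have hpath := isSaturatedPath_rotationPath hAB he
  refine ⟨fun i => (range (#(B \ A) + 1)).image (rotationPath A _ i),
    fun i => (hpath i).isCompleteChain, fun i j hij => ?_⟩
  refine (hpath i).image_inter_image (hpath j) fun k hk0 hkm h => hij ?_
  exact cyclicInterval_left_injective hk0 hkm (cyclicInterval_eq_of_rotationPath_eq he h)

/-- For `A ⊆ B ⊆ [n]` there exist `|B \ A|` pairwise internally
disjoint complete chains from `A` to `B`. -/
theorem stmt3 (n : ℕ) (A B : Finset ℕ) (hAB : A ⊆ B) (hB : B ⊆ Finset.Icc 1 n) :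
    ∃ C : Fin (B \ A).card → Finset (Finset ℕ),
      (∀ i, IsCompleteChain A B (C i)) ∧
      (∀ i j, i ≠ j → C i ∩ C j = {A, B}) :=
  stmt3_general A B hAB
end

section
/- Let s ≥ t ≥ 2 and n ≥ 2s + t − 1. For every A ⊆ [s+t], there exists an upper s-lantern L^s(A), i.e., a union of s−1 pairwise internally disjoint complete chains from A to A ∪ [s+t+1, n] whose last increment set is [s+t+1, 2s+t−1], and there exists a lower t-lantern L_t(A), i.e., a union of t−1 pairwise internally disjoint complete chains from A to A ∪ [s+t+1, n] whose first increment set is [s+t+1, s+2t−1]. -/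
/-- An upper `s`-lantern on `A`: a union of `s - 1` pairwise internally disjoint
complete chains from `A` to `A ∪ [s+t+1, n]` whose last increment set is
`[s+t+1, 2s+t-1]`. -/
def IsUpperLantern (n s t : ℕ) (A : Finset ℕ) (L : Finset (Finset ℕ)) : Prop :=
  IsLanternUnion A (A ∪ Finset.Icc (s+t+1) n) (s-1) L ∧
  lastIncrementSet (A ∪ Finset.Icc (s+t+1) n) L = Finset.Icc (s+t+1) (2*s+t-1)

/-- A lower `t`-lantern on `A`: a union of `t - 1` pairwise internally disjoint
complete chains from `A` to `A ∪ [s+t+1, n]` whose first increment set is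
`[s+t+1, s+2t-1]`. -/
def IsLowerLantern (n s t : ℕ) (A : Finset ℕ) (L : Finset (Finset ℕ)) : Prop :=
  IsLanternUnion A (A ∪ Finset.Icc (s+t+1) n) (t-1) L ∧
  firstIncrementSet A L = Finset.Icc (s+t+1) (s+2*t-1)

/-!
Write `n = s + t + m` and read `[s+t+1, n]` as `ℤ/m`. For a start `a`, the chain
`A ⊂ A ∪ {a} ⊂ A ∪ {a, a+1} ⊂ ⋯` adds the elements of `ℤ/m` in cyclic order from `a`, so its
proper nonempty levels are `A` together with a cyclic interval beginning at `a`. Such an interval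
determines its start, hence chains with distinct starts are internally disjoint. The first
increment of the chain is `a` and its last increment is `a - 1`: the starts `1, …, s-1` give the
upper `s`-lantern and the starts `0, …, t-2` the lower `t`-lantern.
-/

theorem Finset.image_univ_fin_add_eq_Icc (c k : ℕ) :
    (univ : Finset (Fin k)).image (fun i : Fin k => c + 1 + (i : ℕ)) = Icc (c + 1) (c + k) := by
  ext x
  simp only [mem_image, mem_univ, true_and, mem_Icc]
  constructor
  · rintro ⟨i, rfl⟩
    omega
  · intro hx
    exact ⟨⟨x - c - 1, by omega⟩, by simp only; omega⟩

namespace CyclicChain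

open Finset Function

/-- The cyclic interval of length `j` starting at `a`, in `[b+1, b+m]` read as `ℤ/m`. -/
def seg (b m a j : ℕ) : Finset ℕ :=
  (range j).image fun r => b + 1 + (a + r) % m

def chain (A : Finset ℕ) (b m a : ℕ) : Finset (Finset ℕ) :=
  (range (m + 1)).image fun j => A ∪ seg b m a j

def lantern (A : Finset ℕ) (b m : ℕ) {k : ℕ} (start : Fin k → ℕ) : Finset (Finset ℕ) :=
  univ.biUnion fun i => chain A b m (start i)

variable {A : Finset ℕ} {b m a j : ℕ}

theorem eq_of_add_mod_eq {r r' : ℕ} (hr : r < m) (hr' : r' < m)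
    (h : (a + r) % m = (a + r') % m) : r = r' := by
  have : r % m = r' % m := Nat.ModEq.add_left_cancel' a h
  rwa [Nat.mod_eq_of_lt hr, Nat.mod_eq_of_lt hr'] at this

theorem mem_seg {x : ℕ} : x ∈ seg b m a j ↔ ∃ r < j, b + 1 + (a + r) % m = x := by
  simp [seg]

theorem seg_zero : seg b m a 0 = ∅ := by
  simp [seg]

theorem seg_one : seg b m a 1 = {b + 1 + a % m} := by
  simp [seg]

theorem seg_succ : seg b m a (j + 1) = insert (b + 1 + (a + j) % m) (seg b m a j) := by
  simp [seg, range_add_one, image_insert]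

theorem seg_mono {j j' : ℕ} (h : j ≤ j') : seg b m a j ⊆ seg b m a j' :=
  image_subset_image (range_subset_range.mpr h)

theorem card_seg (hj : j ≤ m) : (seg b m a j).card = j := by
  rw [seg, card_image_of_injOn, card_range]
  intro r hr r' hr' h
  simp only [coe_range, Set.mem_Iio] at hr hr'
  exact eq_of_add_mod_eq (m := m) (a := a) (by omega) (by omega) (by simpa using h)

theorem seg_self (hm : 0 < m) : seg b m a m = Icc (b + 1) (b + m) := by
  refine eq_of_subset_of_card_le (fun x hx => ?_) ?_
  · obtain ⟨r, -, rfl⟩ := mem_seg.mp hx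
    have := Nat.mod_lt (a + r) hm
    rw [mem_Icc]
    omega
  · rw [card_seg le_rfl, Nat.card_Icc]
    omega

theorem Icc_sdiff_seg_pred (hm : 0 < m) :
    Icc (b + 1) (b + m) \ seg b m a (m - 1) = {b + 1 + (a + (m - 1)) % m} := by
  have hnot : b + 1 + (a + (m - 1)) % m ∉ seg b m a (m - 1) := by
    intro h
    obtain ⟨r, hr, hra⟩ := mem_seg.mp h
    have := eq_of_add_mod_eq (by omega) (by omega : m - 1 < m) (by omega : (a + r) % m = _)
    omega
  have hsucc := seg_succ (b := b) (m := m) (a := a) (j := m - 1)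
  rw [Nat.sub_add_cancel hm] at hsucc
  rw [← seg_self hm (a := a), hsucc, insert_sdiff_of_notMem _ hnot]
  simp

theorem mod_eq_of_seg_eq {a' : ℕ} (hj : 0 < j) (hjm : j < m)
    (h : seg b m a j = seg b m a' j) : a % m = a' % m := by
  have hstart : b + 1 + a' % m ∈ seg b m a j := h ▸ mem_seg.mpr ⟨0, hj, by simp⟩
  obtain ⟨r, hr, hra⟩ := mem_seg.mp hstart
  have hra : a + r ≡ a' [MOD m] := by simp only [Nat.ModEq]; omega
  rcases Nat.eq_zero_or_pos r with rfl | hr0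
  · exact hra
  -- otherwise `a' - 1 = a + (r - 1)` lies in `seg b m a' j`, which a cyclic interval of
  -- length `j < m` starting at `a'` cannot contain
  have hlast : b + 1 + (a' + (m - 1)) % m ∈ seg b m a' j := by
    rw [← h]
    refine mem_seg.mpr ⟨r - 1, by omega, ?_⟩
    have hshift : a + (r - 1) ≡ a + r + (m - 1) [MOD m] := by
      rw [show a + r + (m - 1) = a + (r - 1) + m by omega]
      exact (Nat.add_mod_right _ _).symm
    rw [hshift.trans (hra.add_right (m - 1))]
  obtain ⟨r', hr', hr'a⟩ := mem_seg.mp hlast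
  have := eq_of_add_mod_eq (by omega) (by omega : m - 1 < m) (by omega : (a' + r') % m = _)
  omega

theorem disjoint_seg (hA : ∀ x ∈ A, x ≤ b) : Disjoint A (seg b m a j) := by
  refine disjoint_right.mpr fun x hx hxA => ?_
  obtain ⟨r, -, rfl⟩ := mem_seg.mp hx
  have := hA _ hxA
  omega

theorem card_union_seg (hA : ∀ x ∈ A, x ≤ b) (hj : j ≤ m) :
    (A ∪ seg b m a j).card = A.card + j := by
  rw [card_union_of_disjoint (disjoint_seg hA), card_seg hj]

theorem mem_chain {X : Finset ℕ} : X ∈ chain A b m a ↔ ∃ j ≤ m, A ∪ seg b m a j = X := by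
  simp [chain]

theorem union_seg_mem_chain (hj : j ≤ m) : A ∪ seg b m a j ∈ chain A b m a :=
  mem_chain.mpr ⟨j, hj, rfl⟩

theorem bot_mem_chain : A ∈ chain A b m a := by
  simpa [seg_zero] using union_seg_mem_chain (A := A) (b := b) (a := a) (Nat.zero_le m)

theorem top_mem_chain (hm : 0 < m) : A ∪ Icc (b + 1) (b + m) ∈ chain A b m a :=
  seg_self (a := a) hm ▸ union_seg_mem_chain le_rfl

theorem eq_union_seg_of_mem_chain (hA : ∀ x ∈ A, x ≤ b) {X : Finset ℕ}
    (hX : X ∈ chain A b m a) (hj : j ≤ m) (hcard : X.card = A.card + j) :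
    X = A ∪ seg b m a j := by
  obtain ⟨j', hj', rfl⟩ := mem_chain.mp hX
  rw [card_union_seg hA hj'] at hcard
  obtain rfl : j' = j := by omega
  rfl

theorem isCompleteChain_chain (hA : ∀ x ∈ A, x ≤ b) (hm : 0 < m) :
    IsCompleteChain A (A ∪ Icc (b + 1) (b + m)) (chain A b m a) := by
  refine ⟨bot_mem_chain, top_mem_chain hm, fun X hX => ?_, fun X hX Y hY => ?_, ?_⟩
  · obtain ⟨j, hj, rfl⟩ := mem_chain.mp hX
    exact ⟨subset_union_left, seg_self (a := a) hm ▸ union_subset_union_right (seg_mono hj)⟩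
  · obtain ⟨j, -, rfl⟩ := mem_chain.mp hX
    obtain ⟨j', -, rfl⟩ := mem_chain.mp hY
    exact (le_total j j').imp (fun h => union_subset_union_right (seg_mono h))
      (fun h => union_subset_union_right (seg_mono h))
  · have hdisj : Disjoint A (Icc (b + 1) (b + m)) := seg_self (a := a) hm ▸ disjoint_seg hA
    rw [union_sdiff_cancel_left hdisj, Nat.card_Icc, chain, card_image_of_injOn, card_range]
    · omega
    intro j hj j' hj' h
    simp only [coe_range, Set.mem_Iio] at hj hj'
    have := congrArg card h
    simp only [card_union_seg hA (show j ≤ m by omega), card_union_seg hA (show j' ≤ m by omega)]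
      at this
    omega

theorem chain_inter_chain (hA : ∀ x ∈ A, x ≤ b) (hm : 0 < m) {a' : ℕ} (hne : a % m ≠ a' % m) :
    chain A b m a ∩ chain A b m a' = {A, A ∪ Icc (b + 1) (b + m)} := by
  ext X
  simp only [mem_inter, mem_insert, mem_singleton]
  constructor
  · rintro ⟨hX, hX'⟩
    obtain ⟨j, hj, rfl⟩ := mem_chain.mp hX
    have hX'' := eq_union_seg_of_mem_chain hA hX' hj (card_union_seg hA hj)
    rcases Nat.eq_zero_or_pos j with rfl | hj0
    · simp [seg_zero]
    rcases hj.eq_or_lt with rfl | hjm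
    · simp [seg_self hm]
    refine absurd (mod_eq_of_seg_eq (b := b) hj0 hjm ?_) hne
    rw [← union_sdiff_cancel_left (disjoint_seg hA (a := a) (j := j)), hX'',
      union_sdiff_cancel_left (disjoint_seg hA)]
  · rintro (rfl | rfl)
    · exact ⟨bot_mem_chain, bot_mem_chain⟩
    · exact ⟨top_mem_chain hm, top_mem_chain hm⟩

variable {k : ℕ} {start : Fin k → ℕ}

theorem mem_lantern {X : Finset ℕ} : X ∈ lantern A b m start ↔ ∃ i, X ∈ chain A b m (start i) := by
  simp [lantern]

theorem isLanternUnion_lantern (hA : ∀ x ∈ A, x ≤ b) (hm : 0 < m)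
    (hstart : Injective fun i => start i % m) :
    IsLanternUnion A (A ∪ Icc (b + 1) (b + m)) k (lantern A b m start) :=
  ⟨fun i => chain A b m (start i), fun _ => isCompleteChain_chain hA hm,
    fun _ _ hij => chain_inter_chain hA hm (hstart.ne hij), rfl⟩

theorem firstIncrementSet_lantern (hA : ∀ x ∈ A, x ≤ b) (hm : 0 < m) :
    firstIncrementSet A (lantern A b m start) = univ.image fun i => b + 1 + start i % m := by
  ext x
  simp only [firstIncrementSet, mem_sdiff, Finset.mem_sup, mem_filter, mem_lantern, id, mem_image,
    mem_univ, true_and]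
  constructor
  · rintro ⟨⟨X, ⟨⟨i, hX⟩, hcard⟩, hxX⟩, hxA⟩
    rw [eq_union_seg_of_mem_chain hA hX hm hcard, seg_one, mem_union, mem_singleton] at hxX
    exact ⟨i, (hxX.resolve_left hxA).symm⟩
  · rintro ⟨i, rfl⟩
    refine ⟨⟨_, ⟨⟨i, union_seg_mem_chain hm⟩, card_union_seg hA hm⟩, ?_⟩, fun h => ?_⟩
    · simp [seg_one]
    · have := hA _ h
      omega

theorem lastIncrementSet_lantern (hA : ∀ x ∈ A, x ≤ b) (hm : 0 < m) :
    lastIncrementSet (A ∪ Icc (b + 1) (b + m)) (lantern A b m start) =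
      univ.image fun i => b + 1 + (start i + (m - 1)) % m := by
  have hcard : (A ∪ Icc (b + 1) (b + m)).card - 1 = A.card + (m - 1) := by
    rw [← seg_self hm (a := 0), card_union_seg hA le_rfl]
    omega
  ext x
  simp only [lastIncrementSet, mem_filter, hcard, mem_lantern, mem_image, mem_univ, true_and]
  constructor
  · rintro ⟨hxB, X, ⟨i, hX⟩, hXcard, hxX⟩
    rw [eq_union_seg_of_mem_chain hA hX (Nat.sub_le m 1) hXcard, mem_union, not_or] at hxX
    have hx : x ∈ Icc (b + 1) (b + m) \ seg b m (start i) (m - 1) :=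
      mem_sdiff.mpr ⟨(mem_union.mp hxB).resolve_left hxX.1, hxX.2⟩
    rw [Icc_sdiff_seg_pred hm, mem_singleton] at hx
    exact ⟨i, hx.symm⟩
  · rintro ⟨i, rfl⟩
    have hx : b + 1 + (start i + (m - 1)) % m ∈ Icc (b + 1) (b + m) \ seg b m (start i) (m - 1) := by
      rw [Icc_sdiff_seg_pred hm]
      exact mem_singleton_self _
    rw [mem_sdiff] at hx
    refine ⟨mem_union_right _ hx.1, _, ⟨i, union_seg_mem_chain (Nat.sub_le m 1)⟩,
      card_union_seg hA (Nat.sub_le m 1), ?_⟩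
    rw [mem_union, not_or]
    refine ⟨fun h => ?_, hx.2⟩
    have := hA _ h
    omega

end CyclicChain

open Finset CyclicChain

/-- For `s ≥ t ≥ 2`, `n ≥ 2s + t - 1` and any `A ⊆ [s+t]`, an
upper `s`-lantern and a lower `t`-lantern on `A` exist. -/
theorem stmt4 (n s t : ℕ) (hts : t ≤ s) (ht : 2 ≤ t) (hn : 2*s + t - 1 ≤ n)
    (A : Finset ℕ) (hA : A ⊆ Finset.Icc 1 (s+t)) :
    (∃ L : Finset (Finset ℕ), IsUpperLantern n s t A L) ∧
    (∃ L : Finset (Finset ℕ), IsLowerLantern n s t A L) := by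
  obtain ⟨m, rfl⟩ : ∃ m, n = s + t + m := ⟨n - (s + t), by omega⟩
  have hA' : ∀ x ∈ A, x ≤ s + t := fun x hx => (mem_Icc.mp (hA hx)).2
  have hm : 0 < m := by omega
  have hlast (i : Fin (s - 1)) : ((i : ℕ) + 1 + (m - 1)) % m = i := by
    rw [show (i : ℕ) + 1 + (m - 1) = i + m by omega, Nat.add_mod_right, Nat.mod_eq_of_lt (by omega)]
  have hfirst (i : Fin (t - 1)) : (i : ℕ) % m = i := Nat.mod_eq_of_lt (by omega)
  refine ⟨⟨lantern A (s + t) m fun i : Fin (s - 1) => i + 1, ?_, ?_⟩,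
    ⟨lantern A (s + t) m fun i : Fin (t - 1) => i, ?_, ?_⟩⟩
  · exact isLanternUnion_lantern hA' hm fun i j hij =>
      Fin.ext (by simpa only [Nat.ModEq, hlast] using Nat.ModEq.add_right (m - 1) hij)
  · simp only [lastIncrementSet_lantern hA' hm, hlast, image_univ_fin_add_eq_Icc]
    congr 1
    omega
  · exact isLanternUnion_lantern hA' hm fun i j hij => Fin.ext (by simpa [hfirst] using hij)
  · simp only [firstIncrementSet_lantern hA' hm, hfirst, image_univ_fin_add_eq_Icc]
    congr 1
    omega
end

section
/- Let s ≥ t ≥ 2, n ≥ 2s + t − 1, and let F' = F_1 ∪ F_2 ∪ F_3 ∪ F_4 be the lantern construction. If F_1, …, F_s ∈ F' are pairwise incomparable under inclusion, then |⋂_{i=1}^{s} (F_i ∩ [s+t−1])| < t. -/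
/-- `F₁ = {[n]} ∪ {[n] \ {x} : x ∈ [s+t-1]}`. -/
def lanternF1 (n s t : ℕ) : Finset (Finset ℕ) :=
  insert (Finset.Icc 1 n) ((Finset.Icc 1 (s+t-1)).image fun x => (Finset.Icc 1 n).erase x)

/-- `F₂`: union over all `t`-element subsets `A` of `[s+t-1]` of the chosen upper lantern `Ls A`. -/
def lanternF2 (s t : ℕ) (Ls : Finset ℕ → Finset (Finset ℕ)) : Finset (Finset ℕ) :=
  (Finset.powersetCard t (Finset.Icc 1 (s+t-1))).biUnion Ls

/-- `F₃`: union over all `(t-1)`-element subsets `A` of `[s+t-1]` of the chosen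
lower lantern `Lt (A ∪ {s+t})`. -/
def lanternF3 (s t : ℕ) (Lt : Finset ℕ → Finset (Finset ℕ)) : Finset (Finset ℕ) :=
  (Finset.powersetCard (t-1) (Finset.Icc 1 (s+t-1))).biUnion fun A => Lt (insert (s+t) A)

/-- `F₄ = {∅} ∪ {{x} : x ∈ [s+t-1]}`. -/
def lanternF4 (s t : ℕ) : Finset (Finset ℕ) :=
  insert ∅ ((Finset.Icc 1 (s+t-1)).image fun x => ({x} : Finset ℕ))

/-- The lantern construction `F' = F₁ ∪ F₂ ∪ F₃ ∪ F₄`. -/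
def lanternFam (n s t : ℕ) (Ls Lt : Finset ℕ → Finset (Finset ℕ)) : Finset (Finset ℕ) :=
  lanternF1 n s t ∪ lanternF2 s t Ls ∪ lanternF3 s t Lt ∪ lanternF4 s t

/-! If `s` pairwise incomparable members of `F'` all contained a `t`-subset `T` of `[s+t-1]`,
each would be `[n]`, some `[n] \ {x}` with `x ∈ [s+t-1] \ T`, or a member of the upper lantern
on `T`: sets from `F₃` or `F₄` meet `[s+t-1]` in fewer than `t` points, and a set of `F₂`
containing `T` lies in the lantern on `T`. Every member of that lantern is strictly contained
in each `[n] \ {x}`, so the `s` sets would be all of the second kind or all of the third.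
There are only `s - 1` such points `x`, and the lantern is a union of `s - 1` chains,
each holding at most one of them. -/

open Finset

namespace IsLanternUnion

variable {A B : Finset ℕ} {k : ℕ} {L : Finset (Finset ℕ)}

theorem subset_of_mem (h : IsLanternUnion A B k L) {X : Finset ℕ} (hX : X ∈ L) :
    A ⊆ X ∧ X ⊆ B := by
  obtain ⟨C, hC, -, rfl⟩ := h
  obtain ⟨c, -, hc⟩ := mem_biUnion.1 hX
  exact (hC c).2.2.1 X hc

theorem card_le_of_pairwise_not_subset (h : IsLanternUnion A B k L) {ι : Type*} [Fintype ι]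
    {G : ι → Finset ℕ} (hG : ∀ i, G i ∈ L) (hinc : ∀ i j, i ≠ j → ¬ G i ⊆ G j) :
    Fintype.card ι ≤ k := by
  obtain ⟨C, hC, -, rfl⟩ := h
  choose c hc using fun i => by simpa using hG i
  have hc_inj : Function.Injective c := by
    intro i j hij
    by_contra hne
    rcases (hC (c i)).2.2.2.1 _ (hc i) _ (hij ▸ hc j) with h | h
    · exact hinc i j hne h
    · exact hinc j i (Ne.symm hne) h
  simpa using Fintype.card_le_of_injective c hc_inj

end IsLanternUnion

theorem card_le_of_injective_of_forall_eq_erase {α ι : Type*} [DecidableEq α] [Fintype ι]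
    {U S : Finset α} {G : ι → Finset α} (hG : Function.Injective G)
    (hGS : ∀ i, ∃ x ∈ S, G i = U.erase x) : Fintype.card ι ≤ #S := by
  choose f hfS hGf using hGS
  have hf_inj : Function.Injective fun i => (⟨f i, hfS i⟩ : S) := fun i j hij => by
    have hfij : f i = f j := congrArg Subtype.val hij
    exact hG <| by rw [hGf i, hGf j, hfij]
  simpa using Fintype.card_le_of_injective _ hf_inj

theorem forall_or_forall_of_pairwise_not_le {ι α : Type*} [PartialOrder α] {P Q : α → Prop}
    {G : ι → α} (hPQ : ∀ X Y, P X → Q Y → X < Y) (hG : ∀ i, P (G i) ∨ Q (G i))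
    (hinc : ∀ i j, i ≠ j → ¬ G i ≤ G j) : (∀ i, P (G i)) ∨ (∀ i, Q (G i)) := by
  by_contra! ⟨⟨i, hi⟩, ⟨j, hj⟩⟩
  have hlt := hPQ _ _ ((hG j).resolve_right hj) ((hG i).resolve_left hi)
  obtain rfl | hji := eq_or_ne j i
  · exact hlt.false
  · exact hinc j i hji hlt.le

theorem disjoint_Icc_of_subset_Icc {T : Finset ℕ} {m k n : ℕ} (hT : T ⊆ Icc 1 m) (hmk : m < k) :
    Disjoint T (Icc k n) :=
  disjoint_left.2 fun x hx hx' => by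
    have := mem_Icc.1 (hT hx)
    have := mem_Icc.1 hx'
    omega

theorem upperLanternTop_ssubset_erase {s t n x : ℕ} {T : Finset ℕ} (hn : s + t ≤ n)
    (hT : T ⊆ Icc 1 (s + t - 1)) (hx : x ∈ Icc 1 (s + t - 1) \ T) :
    T ∪ Icc (s + t + 1) n ⊂ (Icc 1 n).erase x := by
  obtain ⟨hx, hxT⟩ := mem_sdiff.1 hx
  have hx := mem_Icc.1 hx
  refine ssubset_of_subset_of_ne (union_subset ?_ ?_) fun h => ?_
  · intro y hy
    have hy' := mem_Icc.1 (hT hy)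
    exact mem_erase.2 ⟨fun hyx => hxT (hyx ▸ hy), mem_Icc.2 ⟨hy'.1, by omega⟩⟩
  · intro y hy
    have := mem_Icc.1 hy
    exact mem_erase.2 ⟨by omega, mem_Icc.2 ⟨by omega, this.2⟩⟩
  · have hst : s + t ∈ (Icc 1 n).erase x := mem_erase.2 ⟨by omega, mem_Icc.2 ⟨by omega, hn⟩⟩
    rcases mem_union.1 (h ▸ hst) with h | h
    · have := mem_Icc.1 (hT h); omega
    · have := mem_Icc.1 h; omega

theorem eq_or_eq_erase_or_mem_upperLantern_of_superset {n s t : ℕ} (ht : 2 ≤ t)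
    {Ls Lt : Finset ℕ → Finset (Finset ℕ)}
    (hLs : ∀ A ∈ powersetCard t (Icc 1 (s+t-1)), IsUpperLantern n s t A (Ls A))
    (hLt : ∀ A ∈ powersetCard (t-1) (Icc 1 (s+t-1)),
      IsLowerLantern n s t (insert (s+t) A) (Lt (insert (s+t) A)))
    {T F : Finset ℕ} (hT : T ∈ powersetCard t (Icc 1 (s+t-1)))
    (hF : F ∈ lanternFam n s t Ls Lt) (hTF : T ⊆ F) :
    F = Icc 1 n ∨ (∃ x ∈ Icc 1 (s+t-1) \ T, F = (Icc 1 n).erase x) ∨ F ∈ Ls T := by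
  obtain ⟨hT, hTcard⟩ := mem_powersetCard.1 hT
  have hTdisj : Disjoint T (Icc (s+t+1) n) := disjoint_Icc_of_subset_Icc hT (by omega)
  simp only [lanternFam, lanternF1, lanternF2, lanternF3, lanternF4, mem_union, mem_insert,
    mem_image, mem_biUnion] at hF
  rcases hF with (((rfl | ⟨x, hx, rfl⟩) | ⟨A, hA, hFA⟩) | ⟨A, hA, hFA⟩) | rfl | ⟨x, -, rfl⟩
  · exact Or.inl rfl
  · refine Or.inr (Or.inl ⟨x, mem_sdiff.2 ⟨hx, fun hxT => ?_⟩, rfl⟩)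
    exact notMem_erase x _ (hTF hxT)
  · have hTA : T ⊆ A :=
      hTdisj.left_le_of_le_sup_right (hTF.trans ((hLs A hA).1.subset_of_mem hFA).2)
    obtain rfl : T = A := eq_of_subset_of_card_le hTA (by rw [(mem_powersetCard.1 hA).2, hTcard])
    exact Or.inr (Or.inr hFA)
  · have hTA : T ⊆ A := by
      have := hTdisj.left_le_of_le_sup_right (hTF.trans ((hLt A hA).1.subset_of_mem hFA).2)
      refine (subset_insert_iff_of_notMem fun h => ?_).1 this
      have := mem_Icc.1 (hT h)
      omega
    have := card_le_card hTA
    rw [(mem_powersetCard.1 hA).2] at this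
    omega
  · have := card_le_card hTF
    rw [card_empty] at this
    omega
  · have := card_le_card hTF
    rw [card_singleton] at this
    omega

/-- any `s` pairwise incomparable members of the lantern
construction `F'` have `|⋂ᵢ (Fᵢ ∩ [s+t-1])| < t`. -/
theorem stmt5
    (n s t : ℕ) (hts : t ≤ s) (ht : 2 ≤ t) (hn : 2*s + t - 1 ≤ n)
    (Ls Lt : Finset ℕ → Finset (Finset ℕ))
    (hLs : ∀ A ∈ Finset.powersetCard t (Finset.Icc 1 (s+t-1)),
      IsUpperLantern n s t A (Ls A))
    (hLt : ∀ A ∈ Finset.powersetCard (t-1) (Finset.Icc 1 (s+t-1)),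
      IsLowerLantern n s t (insert (s+t) A) (Lt (insert (s+t) A)))
    (G : Fin s → Finset ℕ)
    (hG : ∀ i, G i ∈ lanternFam n s t Ls Lt)
    (hinc : ∀ i j, i ≠ j → ¬ G i ⊆ G j) :
    ((Finset.Icc 1 (s+t-1)).filter fun x => ∀ i, x ∈ G i).card < t := by
  by_contra! hcard
  obtain ⟨T, hTsub, hTcard⟩ := exists_subset_card_eq hcard
  have hT : T ∈ powersetCard t (Icc 1 (s+t-1)) :=
    mem_powersetCard.2 ⟨hTsub.trans (filter_subset _ _), hTcard⟩
  have hcls i := eq_or_eq_erase_or_mem_upperLantern_of_superset ht hLs hLt hT (hG i)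
    fun x hx => (mem_filter.1 (hTsub hx)).2 i
  have hup X (hX : X ∈ Ls T) : X ⊆ T ∪ Icc (s+t+1) n := ((hLs T hT).1.subset_of_mem hX).2
  have hne_top i : G i ≠ Icc 1 n := by
    intro hi
    obtain ⟨j, hj⟩ := Fintype.exists_ne_of_one_lt_card (by rw [Fintype.card_fin]; omega) i
    refine hinc j i hj (hi ▸ ?_)
    rcases hcls j with h | ⟨x, -, h⟩ | h
    · exact h.le
    · exact h ▸ erase_subset _ _
    · exact (hup _ h).trans <| union_subset ((mem_powersetCard.1 hT).1.trans
        (Icc_subset_Icc_right (by omega))) (Icc_subset_Icc_left (by omega))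
  have hcls' i : G i ∈ Ls T ∨ ∃ x ∈ Icc 1 (s+t-1) \ T, G i = (Icc 1 n).erase x :=
    ((hcls i).resolve_left (hne_top i)).symm
  have hlt : ∀ X Y, X ∈ Ls T → (∃ x ∈ Icc 1 (s+t-1) \ T, Y = (Icc 1 n).erase x) → X < Y :=
    fun X Y hX ⟨x, hx, hY⟩ => hY ▸ (hup X hX).trans_ssubset
      (upperLanternTop_ssubset_erase (by omega) (mem_powersetCard.1 hT).1 hx)
  rcases forall_or_forall_of_pairwise_not_le hlt hcls' hinc with hall | hall
  · have := (hLs T hT).1.card_le_of_pairwise_not_subset hall hinc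
    simp only [Fintype.card_fin] at this
    omega
  · have := card_le_of_injective_of_forall_eq_erase
      (fun i j h => by_contra fun hij => hinc i j hij h.le) hall
    rw [Fintype.card_fin, card_sdiff_of_subset (mem_powersetCard.1 hT).1, Nat.card_Icc,
      hTcard] at this
    omega
end

section
/- Let s ≥ t ≥ 2, n ≥ 2s + t − 1, let F' be the lantern construction and F = F' ∪ F_5 the completed construction. If F ∈ 2^[n] ∖ F satisfies |F ∩ [s+t−1]| ∈ {0, s+t−1}, then F ∪ {F} contains an induced copy of K_{s,t}. -/
open Finset

/-- A family of finite sets contains an induced copy of the complete bipartite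
poset `K_{s,t}`: `s` pairwise incomparable "upper" sets and `t` pairwise
incomparable "lower" sets, each lower set strictly contained in each upper set. -/
def ContainsIndKst (s t : ℕ) (F : Finset (Finset ℕ)) : Prop :=
  ∃ (U : Fin s → Finset ℕ) (D : Fin t → Finset ℕ),
    (∀ i, U i ∈ F) ∧ (∀ j, D j ∈ F) ∧
    (∀ i j, i ≠ j → ¬ U i ⊆ U j) ∧
    (∀ i j, i ≠ j → ¬ D i ⊆ D j) ∧
    (∀ i j, D j ⊂ U i)

/-- `F ⊆ 2^[n]` is induced `K_{s,t}`-saturated. -/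
def IsIndKstSaturated (n s t : ℕ) (F : Finset (Finset ℕ)) : Prop :=
  (∀ A ∈ F, A ⊆ Finset.Icc 1 n) ∧
  ¬ ContainsIndKst s t F ∧
  ∀ G ⊆ Finset.Icc 1 n, G ∉ F → ContainsIndKst s t (insert G F)

/-- `sat*(n, K_{s,t})`: minimum size of an induced `K_{s,t}`-saturated family in `2^[n]`. -/
noncomputable def satStarKst (n s t : ℕ) : ℕ :=
  sInf {m | ∃ F : Finset (Finset ℕ), IsIndKstSaturated n s t F ∧ F.card = m}

/-- `G₁ = ⋃_{i=2}^{s} {[n] \ A : A an i-element subset of [2s+t-1]}`. -/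
def lanternG1 (n s t : ℕ) : Finset (Finset ℕ) :=
  (Finset.Icc 2 s).biUnion fun i =>
    (Finset.powersetCard i (Finset.Icc 1 (2*s+t-1))).image fun A => Finset.Icc 1 n \ A

/-- `G₂ = ⋃_{i=2}^{t} {A : A an i-element subset of [s+2t-1]}`. -/
def lanternG2 (s t : ℕ) : Finset (Finset ℕ) :=
  (Finset.Icc 2 t).biUnion fun i => Finset.powersetCard i (Finset.Icc 1 (s+2*t-1))

/-!
The copy of `K_{s,t}` can be found inside `F₁ ∪ F₄ ∪ {F}`. If `F` misses the core `[s+t-1]`,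
then `F` and the singletons `{1}, …, {t-1}` lie strictly below the co-singletons
`[n] ∖ {t}, …, [n] ∖ {s+t-1}`. If `F` contains the core, then the singletons `{1}, …, {t}` lie
strictly below `F` and the co-singletons `[n] ∖ {t+1}, …, [n] ∖ {s+t-1}`. In both cases every
equality or comparability that would spoil the copy of `K_{s,t}` would put `F` into `F₁ ∪ F₄`.
-/

section Antichains

variable {α : Type*} [DecidableEq α]

lemma isAntichain_image_erase {S T : Finset α} (hT : T ⊆ S) :
    IsAntichain (· ⊆ ·) (T.image S.erase : Set (Finset α)) := by
  rw [coe_image]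
  rintro _ ⟨x, -, rfl⟩ _ ⟨y, hy, rfl⟩ hne hsub
  have hyx : y ≠ x := by rintro rfl; exact hne rfl
  exact notMem_erase y S (hsub (mem_erase.2 ⟨hyx, hT hy⟩))

lemma isAntichain_image_singleton (T : Finset α) :
    IsAntichain (· ⊆ ·) (T.image (singleton : α → Finset α) : Set (Finset α)) := by
  rw [coe_image]
  rintro _ ⟨x, -, rfl⟩ _ ⟨y, -, rfl⟩ hne hsub
  exact hne (by rw [singleton_subset_singleton.1 hsub])

lemma card_image_erase {S T : Finset α} (hT : T ⊆ S) : #(T.image S.erase) = #T :=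
  card_image_of_injOn ((erase_injOn S).mono (coe_subset.2 hT))

lemma singleton_ssubset_erase {S : Finset α} {x y : α} (hy : y ∈ S) (hyx : y ≠ x)
    (hS : 2 < #S) : {y} ⊂ S.erase x := by
  refine Finset.ssubset_iff_subset_ne.2 ⟨singleton_subset_iff.2 (mem_erase.2 ⟨hyx, hy⟩), fun h => ?_⟩
  have hcard := pred_card_le_card_erase (s := S) (a := x)
  rw [← h, card_singleton] at hcard
  omega

end Antichains

lemma ContainsIndKst.mono {s t : ℕ} {G H : Finset (Finset ℕ)} (h : ContainsIndKst s t G)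
    (hGH : G ⊆ H) : ContainsIndKst s t H := by
  obtain ⟨U, D, hU, hD, hUU, hDD, hDU⟩ := h
  exact ⟨U, D, fun i => hGH (hU i), fun j => hGH (hD j), hUU, hDD, hDU⟩

lemma containsIndKst_of_isAntichain {s t : ℕ} {G 𝒰 𝒟 : Finset (Finset ℕ)}
    (h𝒰G : 𝒰 ⊆ G) (h𝒟G : 𝒟 ⊆ G) (h𝒰 : #𝒰 = s) (h𝒟 : #𝒟 = t)
    (h𝒰a : IsAntichain (· ⊆ ·) (𝒰 : Set (Finset ℕ)))
    (h𝒟a : IsAntichain (· ⊆ ·) (𝒟 : Set (Finset ℕ)))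
    (h𝒟𝒰 : ∀ U ∈ 𝒰, ∀ D ∈ 𝒟, D ⊂ U) : ContainsIndKst s t G := by
  subst h𝒰 h𝒟
  set u := 𝒰.equivFin.symm
  set d := 𝒟.equivFin.symm
  refine ⟨fun i => u i, fun j => d j, fun i => h𝒰G (u i).2, fun j => h𝒟G (d j).2,
    fun i j hij => h𝒰a (u i).2 (u j).2 ?_, fun i j hij => h𝒟a (d i).2 (d j).2 ?_,
    fun i j => h𝒟𝒰 _ (u i).2 _ (d j).2⟩
  · exact fun h => hij (u.injective (Subtype.ext h))
  · exact fun h => hij (d.injective (Subtype.ext h))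

section Lantern

variable {n s t : ℕ}

lemma Icc_mem_lanternF1 : Icc 1 n ∈ lanternF1 n s t := mem_insert_self _ _

lemma image_erase_subset_lanternF1 {T : Finset ℕ} (hT : T ⊆ Icc 1 (s + t - 1)) :
    T.image (Icc 1 n).erase ⊆ lanternF1 n s t :=
  (image_subset_image hT).trans (subset_insert _ _)

lemma empty_mem_lanternF4 : ∅ ∈ lanternF4 s t := mem_insert_self _ _

lemma image_singleton_subset_lanternF4 {T : Finset ℕ} (hT : T ⊆ Icc 1 (s + t - 1)) :
    T.image singleton ⊆ lanternF4 s t :=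
  (image_subset_image hT).trans (subset_insert _ _)

lemma containsIndKst_insert_of_disjoint (ht : 1 ≤ t) (hm : s + t - 1 ≤ n) (hn : 3 ≤ n)
    {F : Finset ℕ} (hFn : F ⊆ Icc 1 n) (hF : F ∉ lanternF1 n s t ∪ lanternF4 s t)
    (hdisj : Disjoint F (Icc 1 (s + t - 1))) :
    ContainsIndKst s t (insert F (lanternF1 n s t ∪ lanternF4 s t)) := by
  have hU : Icc t (s + t - 1) ⊆ Icc 1 (s + t - 1) := Icc_subset_Icc_left ht
  have hS : Icc 1 (t - 1) ⊆ Icc 1 (s + t - 1) := Icc_subset_Icc_right (by omega)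
  have h𝒰 := image_erase_subset_lanternF1 (n := n) hU
  have h𝒮 := image_singleton_subset_lanternF4 hS
  have hF𝒮 : F ∉ (Icc 1 (t - 1)).image singleton := fun h => hF (mem_union_right _ (h𝒮 h))
  refine containsIndKst_of_isAntichain ((h𝒰.trans subset_union_left).trans (subset_insert _ _))
    (insert_subset_insert _ (h𝒮.trans subset_union_right)) ?_ ?_
    (isAntichain_image_erase (hU.trans (Icc_subset_Icc_right hm))) ?_ ?_
  · rw [card_image_erase (hU.trans (Icc_subset_Icc_right hm)), Nat.card_Icc]
    omega
  · rw [card_insert_of_notMem hF𝒮, card_image_of_injective _ singleton_injective, Nat.card_Icc]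
    omega
  · rw [coe_insert]
    refine (isAntichain_image_singleton (Icc 1 (t - 1))).insert ?_ ?_ <;>
      simp only [coe_image, Set.mem_image, mem_coe, mem_Icc] <;> rintro _ ⟨j, hj, rfl⟩ -
    · exact fun h => disjoint_left.1 hdisj (singleton_subset_iff.1 h) (mem_Icc.2 ⟨hj.1, by omega⟩)
    · intro h
      rcases subset_singleton_iff.1 h with rfl | rfl
      · exact hF (mem_union_right _ empty_mem_lanternF4)
      · exact hF𝒮 (mem_image_of_mem _ (mem_Icc.2 hj))
  · simp only [mem_image, mem_Icc, forall_exists_index, and_imp]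
    rintro _ x hxt hxm rfl D hD
    rcases mem_insert.1 hD with rfl | hD
    · have hxD : x ∉ D := disjoint_right.1 hdisj (mem_Icc.2 ⟨by omega, hxm⟩)
      refine Finset.ssubset_iff_subset_ne.2 ⟨fun y hy => mem_erase.2 ⟨?_, hFn hy⟩, ?_⟩
      · rintro rfl; exact hxD hy
      · rintro rfl
        exact hF (mem_union_left _ (h𝒰 (mem_image_of_mem _ (mem_Icc.2 ⟨hxt, hxm⟩))))
    · obtain ⟨j, hj, rfl⟩ := mem_image.1 hD
      rw [mem_Icc] at hj
      exact singleton_ssubset_erase (mem_Icc.2 ⟨hj.1, by omega⟩) (by omega)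
        (by rw [Nat.card_Icc]; omega)

lemma containsIndKst_insert_of_Icc_subset (hs : 1 ≤ s) (hm : s + t - 1 ≤ n) (hn : 3 ≤ n)
    {F : Finset ℕ} (hFn : F ⊆ Icc 1 n) (hF : F ∉ lanternF1 n s t ∪ lanternF4 s t)
    (hcore : Icc 1 (s + t - 1) ⊆ F) :
    ContainsIndKst s t (insert F (lanternF1 n s t ∪ lanternF4 s t)) := by
  have hU : Icc (t + 1) (s + t - 1) ⊆ Icc 1 (s + t - 1) := Icc_subset_Icc_left (by omega)
  have hS : Icc 1 t ⊆ Icc 1 (s + t - 1) := Icc_subset_Icc_right (by omega)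
  have hUn : Icc (t + 1) (s + t - 1) ⊆ Icc 1 n := hU.trans (Icc_subset_Icc_right hm)
  have h𝒰 := image_erase_subset_lanternF1 (n := n) hU
  have h𝒮 := image_singleton_subset_lanternF4 hS
  have hF𝒰 : F ∉ (Icc (t + 1) (s + t - 1)).image (Icc 1 n).erase :=
    fun h => hF (mem_union_left _ (h𝒰 h))
  refine containsIndKst_of_isAntichain (insert_subset_insert _ (h𝒰.trans subset_union_left))
    ((h𝒮.trans subset_union_right).trans (subset_insert _ _)) ?_ ?_ ?_
    (isAntichain_image_singleton _) ?_
  · rw [card_insert_of_notMem hF𝒰, card_image_erase hUn, Nat.card_Icc]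
    omega
  · rw [card_image_of_injective _ singleton_injective, Nat.card_Icc]
    omega
  · rw [coe_insert]
    refine (isAntichain_image_erase hUn).insert ?_ ?_ <;>
      simp only [coe_image, Set.mem_image, mem_coe, mem_Icc] <;> rintro _ ⟨x, hx, rfl⟩ -
    · intro h
      have hxF : x ∈ F := hcore (mem_Icc.2 ⟨by omega, hx.2⟩)
      refine hF (mem_union_left _ (subset_antisymm hFn ?_ ▸ Icc_mem_lanternF1))
      rw [← insert_erase (hUn (mem_Icc.2 hx))]
      exact insert_subset hxF h
    · exact fun h => notMem_erase x _ (h (hcore (mem_Icc.2 ⟨by omega, hx.2⟩)))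
  · simp only [mem_insert, mem_image, mem_Icc]
    rintro U hU' _ ⟨j, hj, rfl⟩
    rcases hU' with rfl | ⟨x, hx, rfl⟩
    · refine Finset.ssubset_iff_subset_ne.2
        ⟨singleton_subset_iff.2 (hcore (mem_Icc.2 ⟨hj.1, by omega⟩)), ?_⟩
      rintro rfl
      exact hF (mem_union_right _ (h𝒮 (mem_image_of_mem _ (mem_Icc.2 hj))))
    · exact singleton_ssubset_erase (mem_Icc.2 ⟨hj.1, by omega⟩) (by omega)
        (by rw [Nat.card_Icc]; omega)

end Lantern

theorem stmt8_general
    (n s t : ℕ) (hts : t ≤ s) (ht : 2 ≤ t) (hn : 2*s + t - 1 ≤ n)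
    (Ls Lt : Finset ℕ → Finset (Finset ℕ))
    (F5 : Finset (Finset ℕ))
    (F : Finset ℕ) (hFsub : F ⊆ Finset.Icc 1 n)
    (hFnot : F ∉ lanternFam n s t Ls Lt ∪ F5)
    (hcard : (F ∩ Finset.Icc 1 (s+t-1)).card = 0 ∨
             (F ∩ Finset.Icc 1 (s+t-1)).card = s+t-1) :
    ContainsIndKst s t (insert F (lanternFam n s t Ls Lt ∪ F5)) := by
  have hK : lanternF1 n s t ∪ lanternF4 s t ⊆ lanternFam n s t Ls Lt ∪ F5 := by
    intro X
    simp only [lanternFam, mem_union]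
    tauto
  have hF : F ∉ lanternF1 n s t ∪ lanternF4 s t := fun h => hFnot (hK h)
  refine ContainsIndKst.mono ?_ (insert_subset_insert F hK)
  rcases hcard with hdisj | hcore
  · exact containsIndKst_insert_of_disjoint (by omega) (by omega) (by omega) hFsub hF
      (disjoint_iff_inter_eq_empty.2 (card_eq_zero.1 hdisj))
  · refine containsIndKst_insert_of_Icc_subset (by omega) (by omega) (by omega) hFsub hF ?_
    refine inter_eq_right.1 (eq_of_subset_of_card_le inter_subset_right ?_)
    rw [hcore, Nat.card_Icc]
    omega

/-- for the completed construction `F = F' ∪ F₅`, adding any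
`F ∈ 2^[n] \ F` with `|F ∩ [s+t-1]| ∈ {0, s+t-1}` creates an induced `K_{s,t}`. -/
theorem stmt8
    (n s t : ℕ) (hts : t ≤ s) (ht : 2 ≤ t) (hn : 2*s + t - 1 ≤ n)
    (Ls Lt : Finset ℕ → Finset (Finset ℕ))
    (hLs : ∀ A ∈ Finset.powersetCard t (Finset.Icc 1 (s+t-1)),
      IsUpperLantern n s t A (Ls A))
    (hLt : ∀ A ∈ Finset.powersetCard (t-1) (Finset.Icc 1 (s+t-1)),
      IsLowerLantern n s t (insert (s+t) A) (Lt (insert (s+t) A)))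
    (F5 : Finset (Finset ℕ))
    (hF5sub : F5 ⊆ lanternG1 n s t ∪ lanternG2 s t)
    (hF5free : ¬ ContainsIndKst s t (lanternFam n s t Ls Lt ∪ F5))
    (hF5max : ∀ X ∈ lanternG1 n s t ∪ lanternG2 s t, X ∉ F5 →
      ContainsIndKst s t (lanternFam n s t Ls Lt ∪ insert X F5))
    (F : Finset ℕ) (hFsub : F ⊆ Finset.Icc 1 n)
    (hFnot : F ∉ lanternFam n s t Ls Lt ∪ F5)
    (hcard : (F ∩ Finset.Icc 1 (s+t-1)).card = 0 ∨
             (F ∩ Finset.Icc 1 (s+t-1)).card = s+t-1) :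
    ContainsIndKst s t (insert F (lanternFam n s t Ls Lt ∪ F5)) :=
  stmt8_general n s t hts ht hn Ls Lt F5 F hFsub hFnot hcard
end

section
/- Let s ≥ t ≥ 2, n ≥ 2s + t − 1, let F' be the lantern construction and F = F' ∪ F_5 the completed construction. If F ∈ 2^[n] ∖ F satisfies 1 ≤ |F ∩ [s+t−1]| ≤ t − 1, then F ∪ {F} contains an induced copy of K_{s,t}. -/
open Finset

/-!
If `F` lies in `G₁ ∪ G₂`, maximality of `F₅` produces the copy of `K_{s,t}`. Otherwise extend
`F ∩ [s+t-1]` to a `(t-1)`-set `A` and use the lower lantern on `A ∪ {s+t}`, whose top is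
`A ∪ [s+t, n] ⊇ F`. The upper part consists of the `s` sets `[n] ∖ {x}`, `x ∈ [s+t-1] ∖ A`, which
all contain that top. The lower part is `F` together with one set of size `max(|F|, t+1)` from each
of the `t-1` chains of the lantern. A chain set comparable with `F` would either equal `F`, which
is not in the family, or be of size `t+1 ≥ |F|+1`; then it lies in `[s+2t-1]` by the condition on
the first increment set, which puts `F` in `G₂` or `F₄`.
-/

theorem IsCompleteChain.exists_mem_card_eq {A B : Finset ℕ} {C : Finset (Finset ℕ)}
    (h : IsCompleteChain A B C) {m : ℕ} (hAm : A.card ≤ m) (hmB : m ≤ B.card) :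
    ∃ X ∈ C, X.card = m := by
  obtain ⟨hA, -, hbetween, htotal, hcard⟩ := h
  have hAB : A ⊆ B := (hbetween A hA).2
  have hinj : Set.InjOn card (C : Set (Finset ℕ)) := fun X hX Y hY hXY =>
    (htotal X hX Y hY).elim (fun h => eq_of_subset_of_card_le h hXY.ge)
      (fun h => (eq_of_subset_of_card_le h hXY.le).symm)
  have himage : C.image card = Icc A.card B.card := by
    refine eq_of_subset_of_card_le (fun k hk => ?_) ?_
    · obtain ⟨X, hX, rfl⟩ := mem_image.1 hk
      exact mem_Icc.2 ⟨card_le_card (hbetween X hX).1, card_le_card (hbetween X hX).2⟩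
    · rw [card_image_of_injOn hinj, hcard, Nat.card_Icc, card_sdiff_of_subset hAB]
      have := card_le_card hAB
      omega
  have hm : m ∈ C.image card := himage ▸ mem_Icc.2 ⟨hAm, hmB⟩
  simpa using hm

theorem IsLanternUnion.right_mem {A B : Finset ℕ} {k : ℕ} {L : Finset (Finset ℕ)}
    (h : IsLanternUnion A B k L) (hk : 0 < k) : B ∈ L := by
  obtain ⟨C, hC, -, rfl⟩ := h
  exact mem_biUnion.2 ⟨⟨0, hk⟩, mem_univ _, (hC _).2.1⟩

/-- Internal disjointness makes the level-`m` sets of the chains distinct, as long as `m` is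
neither the bottom nor the top level. -/
theorem IsLanternUnion.exists_level_antichain {A B : Finset ℕ} {k : ℕ} {L : Finset (Finset ℕ)}
    (h : IsLanternUnion A B k L) {m : ℕ} (hAm : A.card < m) (hmB : m ≤ B.card)
    (hdistinct : m < B.card ∨ k ≤ 1) :
    ∃ M : Fin k → Finset ℕ, (∀ j, M j ∈ L) ∧ (∀ j, A ⊆ M j ∧ M j ⊆ B) ∧
      (∀ j, (M j).card = m) ∧ ∀ i j, i ≠ j → ¬ M i ⊆ M j := by
  obtain ⟨C, hC, hdisj, rfl⟩ := h
  choose M hMC hMcard using fun j => (hC j).exists_mem_card_eq hAm.le hmB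
  refine ⟨M, fun j => mem_biUnion.2 ⟨j, mem_univ j, hMC j⟩,
    fun j => (hC j).2.2.1 _ (hMC j), hMcard, fun i j hij hsub => ?_⟩
  have heq : M i = M j := eq_of_subset_of_card_le hsub (by rw [hMcard, hMcard])
  have hmem : M i ∈ C i ∩ C j := mem_inter.2 ⟨hMC i, heq ▸ hMC j⟩
  have hk : 1 < k := by
    have := Fin.val_ne_of_ne hij
    omega
  rw [hdisj i j hij, mem_insert, mem_singleton] at hmem
  rcases hmem with hbot | htop
  · rw [← hMcard i, hbot] at hAm
    exact lt_irrefl _ hAm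
  · rw [← hMcard i, htop] at hdistinct
    omega

theorem subset_union_firstIncrementSet {A X : Finset ℕ} {L : Finset (Finset ℕ)} (hX : X ∈ L)
    (hcard : X.card = A.card + 1) : X ⊆ A ∪ firstIncrementSet A L := by
  rw [firstIncrementSet, union_sdiff_self_eq_union]
  exact (le_sup (f := id) (mem_filter.2 ⟨hX, hcard⟩)).trans subset_union_right

theorem erase_not_subset_erase {α : Type*} [DecidableEq α] {T : Finset α} {x y : α}
    (hy : y ∈ T) (hxy : x ≠ y) : ¬ T.erase x ⊆ T.erase y :=
  fun h => notMem_erase y T (h (mem_erase.2 ⟨hxy.symm, hy⟩))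

theorem containsIndKst_succ {s t : ℕ} {G : Finset (Finset ℕ)} (U : Fin s → Finset ℕ)
    (D : Fin t → Finset ℕ) (X : Finset ℕ) (hU : ∀ i, U i ∈ G) (hD : ∀ j, D j ∈ G) (hX : X ∈ G)
    (hUU : ∀ i j, i ≠ j → ¬ U i ⊆ U j) (hDD : ∀ i j, i ≠ j → ¬ D i ⊆ D j)
    (hXD : ∀ j, ¬ X ⊆ D j) (hDX : ∀ j, ¬ D j ⊆ X)
    (hDU : ∀ i j, D j ⊂ U i) (hXU : ∀ i, X ⊂ U i) : ContainsIndKst s (t + 1) G := by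
  refine ⟨U, Fin.cons X D, hU, Fin.cases hX hD, hUU, fun i j hij => ?_, fun i j => ?_⟩
  · cases i using Fin.cases <;> cases j using Fin.cases
    · exact absurd rfl hij
    · exact hXD _
    · exact hDX _
    · exact hDD _ _ fun h => hij (congrArg Fin.succ h)
  · cases j using Fin.cases
    · exact hXU i
    · exact hDU i _

section LowerLantern

variable {n s t : ℕ} {A : Finset ℕ}

theorem subset_insert_union_Icc {F : Finset ℕ} (hF : F ⊆ Icc 1 n)
    (hFA : F ∩ Icc 1 (s + t - 1) ⊆ A) : F ⊆ insert (s + t) A ∪ Icc (s + t + 1) n := by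
  intro a ha
  have ha' := mem_Icc.1 (hF ha)
  simp only [mem_union, mem_insert, mem_Icc]
  by_cases hlow : a ≤ s + t - 1
  · exact Or.inl (Or.inr (hFA (mem_inter.2 ⟨ha, mem_Icc.2 ⟨ha'.1, hlow⟩⟩)))
  · by_cases hst : a = s + t
    · exact Or.inl (Or.inl hst)
    · exact Or.inr ⟨by omega, ha'.2⟩

theorem card_insert_union_Icc (hA : A ∈ powersetCard (t - 1) (Icc 1 (s + t - 1)))
    (ht : 1 ≤ t) (hn : s + t ≤ n) : (insert (s + t) A ∪ Icc (s + t + 1) n).card = n - s := by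
  obtain ⟨hAsub, hAcard⟩ := mem_powersetCard.1 hA
  have hlt : ∀ a ∈ A, a < s + t := fun a ha => by
    have := mem_Icc.1 (hAsub ha)
    omega
  have hdisj : Disjoint (insert (s + t) A) (Icc (s + t + 1) n) := by
    refine disjoint_left.2 fun a ha hIcc => ?_
    have := (mem_Icc.1 hIcc).1
    rcases mem_insert.1 ha with rfl | ha
    · omega
    · have := hlt a ha
      omega
  rw [card_union_of_disjoint hdisj, card_insert_of_notMem fun h => lt_irrefl _ (hlt _ h),
    hAcard, Nat.card_Icc]
  omega

theorem insert_union_Icc_ssubset_erase (hA : A ⊆ Icc 1 (s + t - 1)) (hs : 2 ≤ s)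
    (hn : s + t ≤ n) (htop : (insert (s + t) A ∪ Icc (s + t + 1) n).card = n - s)
    {x : ℕ} (hx : x ∈ Icc 1 (s + t - 1) \ A) :
    insert (s + t) A ∪ Icc (s + t + 1) n ⊂ (Icc 1 n).erase x := by
  obtain ⟨hxIcc, hxA⟩ := mem_sdiff.1 hx
  have hx' := mem_Icc.1 hxIcc
  have hsub : insert (s + t) A ∪ Icc (s + t + 1) n ⊆ (Icc 1 n).erase x := by
    intro a ha
    rcases mem_union.1 ha with ha | ha
    · rcases mem_insert.1 ha with rfl | ha
      · exact mem_erase.2 ⟨by omega, mem_Icc.2 ⟨by omega, hn⟩⟩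
      · have := mem_Icc.1 (hA ha)
        exact mem_erase.2 ⟨fun h => hxA (h ▸ ha), mem_Icc.2 ⟨this.1, by omega⟩⟩
    · have := mem_Icc.1 ha
      exact mem_erase.2 ⟨by omega, mem_Icc.2 ⟨by omega, this.2⟩⟩
  refine hsub.ssubset_of_ne fun h => ?_
  have := congrArg card h
  rw [htop, card_erase_of_mem (mem_Icc.2 ⟨hx'.1, by omega⟩), Nat.card_Icc] at this
  omega

theorem exists_lanternF1_antichain_above (hA : A ∈ powersetCard (t - 1) (Icc 1 (s + t - 1)))
    (hs : 2 ≤ s) (ht : 1 ≤ t) (hn : s + t + 1 ≤ n) :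
    ∃ U : Fin s → Finset ℕ, (∀ i, U i ∈ lanternF1 n s t) ∧ (∀ i j, i ≠ j → ¬ U i ⊆ U j) ∧
      ∀ i, insert (s + t) A ∪ Icc (s + t + 1) n ⊂ U i := by
  obtain ⟨hAsub, hAcard⟩ := mem_powersetCard.1 hA
  have hXcard : (Icc 1 (s + t - 1) \ A).card = s := by
    rw [card_sdiff_of_subset hAsub, Nat.card_Icc, hAcard]
    omega
  set x : Fin s → ℕ := fun i => (Icc 1 (s + t - 1) \ A).orderIsoOfFin hXcard i
  have hx : ∀ i, x i ∈ Icc 1 (s + t - 1) \ A := fun i => (orderIsoOfFin _ hXcard i).2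
  have hxn : ∀ i, x i ∈ Icc 1 n := fun i =>
    Icc_subset_Icc le_rfl (by omega) (mem_sdiff.1 (hx i)).1
  refine ⟨fun i => (Icc 1 n).erase (x i),
    fun i => mem_insert_of_mem (mem_image_of_mem _ (mem_sdiff.1 (hx i)).1),
    fun i j hij => erase_not_subset_erase (hxn j)
      ((Subtype.val_injective.comp (orderIsoOfFin _ hXcard).injective).ne hij),
    fun i => insert_union_Icc_ssubset_erase hAsub hs (by omega)
      (card_insert_union_Icc hA ht (by omega)) (hx i)⟩

end LowerLantern

theorem containsIndKst_insert_of_lowerLantern {n s t : ℕ} (hts : t ≤ s) (ht : 2 ≤ t)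
    (hn : 2 * s + t - 1 ≤ n) {A : Finset ℕ} (hA : A ∈ powersetCard (t - 1) (Icc 1 (s + t - 1)))
    {L G : Finset (Finset ℕ)} (hL : IsLowerLantern n s t (insert (s + t) A) L) (hLG : L ⊆ G)
    (hF1G : lanternF1 n s t ⊆ G) {F : Finset ℕ} (hF : F ⊆ Icc 1 n) (hFG : F ∉ G)
    (hFA : F ∩ Icc 1 (s + t - 1) ⊆ A) (hsmall : F.card ≤ t → ¬ F ⊆ Icc 1 (s + 2 * t - 1)) :
    ContainsIndKst s t (insert F G) := by
  obtain ⟨hAsub, hAcard⟩ := mem_powersetCard.1 hA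
  obtain ⟨hLU, hfirst⟩ := hL
  set B := insert (s + t) A
  set top := B ∪ Icc (s + t + 1) n
  have hBcard : B.card = t := by
    rw [card_insert_of_notMem fun h => by have := mem_Icc.1 (hAsub h); omega, hAcard]
    omega
  have htopcard : top.card = n - s := card_insert_union_Icc hA (by omega) (by omega)
  have hFtop : F ⊂ top := (subset_insert_union_Icc hF hFA).ssubset_of_ne
    fun h => hFG (h ▸ hLG (hLU.right_mem (by omega)))
  have hFcard : F.card < n - s := htopcard ▸ card_lt_card hFtop
  obtain ⟨M, hML, hMbetween, hMcard, hMM⟩ := hLU.exists_level_antichain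
    (m := max F.card (t + 1)) (by omega) (by omega) (by omega)
  have hMF : ∀ j, ¬ M j ⊆ F := fun j h =>
    hFG (eq_of_subset_of_card_le h (by rw [hMcard]; omega) ▸ hLG (hML j))
  have hFM : ∀ j, ¬ F ⊆ M j := by
    intro j h
    by_cases hlevel : F.card = max F.card (t + 1)
    · exact hFG ((eq_of_subset_of_card_le h (by rw [hMcard]; omega)).symm ▸ hLG (hML j))
    have hMsub : M j ⊆ B ∪ Icc (s + t + 1) (s + 2 * t - 1) := hfirst ▸
      subset_union_firstIncrementSet (hML j) (by rw [hMcard, hBcard]; omega)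
    refine hsmall (by omega) (h.trans (hMsub.trans (union_subset ?_ ?_)))
    · exact insert_subset (mem_Icc.2 ⟨by omega, by omega⟩)
        (hAsub.trans (Icc_subset_Icc le_rfl (by omega)))
    · exact Icc_subset_Icc (by omega) le_rfl
  obtain ⟨U, hUF1, hUU, htopU⟩ :=
    exists_lanternF1_antichain_above (n := n) hA (by omega) (by omega) (by omega)
  have key : ContainsIndKst s (t - 1 + 1) (insert F G) :=
    containsIndKst_succ U M F (fun i => mem_insert_of_mem (hF1G (hUF1 i)))
      (fun j => mem_insert_of_mem (hLG (hML j))) (mem_insert_self F G) hUU hMM hFM hMF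
      (fun i j => (hMbetween j).2.trans_ssubset (htopU i)) (fun i => hFtop.trans (htopU i))
  rwa [Nat.sub_add_cancel (by omega : 1 ≤ t)] at key

theorem mem_lanternG2_or_mem_lanternF4 {s t : ℕ} {F : Finset ℕ}
    (hF : F ⊆ Icc 1 (s + 2 * t - 1)) (hcard : F.card ≤ t)
    (hlow : 1 ≤ (F ∩ Icc 1 (s + t - 1)).card) : F ∈ lanternG2 s t ∨ F ∈ lanternF4 s t := by
  rcases le_or_gt 2 F.card with h2 | h2
  · exact Or.inl (mem_biUnion.2 ⟨F.card, mem_Icc.2 ⟨h2, hcard⟩, mem_powersetCard.2 ⟨hF, rfl⟩⟩)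
  obtain ⟨a, ha⟩ := card_pos.1 (by omega : 0 < (F ∩ Icc 1 (s + t - 1)).card)
  obtain ⟨haF, haIcc⟩ := mem_inter.1 ha
  have hFa : F = {a} := eq_singleton_iff_unique_mem.2
    ⟨haF, fun b hb => card_le_one.1 (by omega) b hb a haF⟩
  exact Or.inr (mem_insert_of_mem (mem_image.2 ⟨a, haIcc, hFa.symm⟩))

theorem stmt9_general
    (n s t : ℕ) (hts : t ≤ s) (ht : 2 ≤ t) (hn : 2*s + t - 1 ≤ n)
    (Ls Lt : Finset ℕ → Finset (Finset ℕ))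
    (hLt : ∀ A ∈ Finset.powersetCard (t-1) (Finset.Icc 1 (s+t-1)),
      IsLowerLantern n s t (insert (s+t) A) (Lt (insert (s+t) A)))
    (F5 : Finset (Finset ℕ))
    (hF5max : ∀ X ∈ lanternG1 n s t ∪ lanternG2 s t, X ∉ F5 →
      ContainsIndKst s t (lanternFam n s t Ls Lt ∪ insert X F5))
    (F : Finset ℕ) (hFsub : F ⊆ Finset.Icc 1 n)
    (hFnot : F ∉ lanternFam n s t Ls Lt ∪ F5)
    (hlow : 1 ≤ (F ∩ Finset.Icc 1 (s+t-1)).card)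
    (hhigh : (F ∩ Finset.Icc 1 (s+t-1)).card ≤ t - 1) :
    ContainsIndKst s t (insert F (lanternFam n s t Ls Lt ∪ F5)) := by
  by_cases hG : F ∈ lanternG1 n s t ∪ lanternG2 s t
  · rw [← union_insert]
    exact hF5max F hG fun h => hFnot (mem_union_right _ h)
  obtain ⟨A, hSA, hAsub, hAcard⟩ :=
    exists_subsuperset_card_eq inter_subset_right hhigh (by rw [Nat.card_Icc]; omega)
  have hA : A ∈ powersetCard (t - 1) (Icc 1 (s + t - 1)) := mem_powersetCard.2 ⟨hAsub, hAcard⟩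
  refine containsIndKst_insert_of_lowerLantern hts ht hn hA (hLt A hA) ?_ ?_ hFsub hFnot hSA ?_
  · refine (subset_biUnion_of_mem (fun A => Lt (insert (s + t) A)) hA).trans fun X hX => ?_
    simp only [lanternFam, lanternF3, mem_union] at hX ⊢
    tauto
  · intro X hX
    simp only [lanternFam, mem_union]
    tauto
  · intro hcard hsub
    rcases mem_lanternG2_or_mem_lanternF4 hsub hcard hlow with hG2 | hF4
    · exact hG (mem_union_right _ hG2)
    · exact hFnot (by simp only [lanternFam, mem_union]; tauto)

/-- for the completed construction `F = F' ∪ F₅`, adding any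
`F ∈ 2^[n] \ F` with `1 ≤ |F ∩ [s+t-1]| ≤ t - 1` creates an induced `K_{s,t}`. -/
theorem stmt9
    (n s t : ℕ) (hts : t ≤ s) (ht : 2 ≤ t) (hn : 2*s + t - 1 ≤ n)
    (Ls Lt : Finset ℕ → Finset (Finset ℕ))
    (hLs : ∀ A ∈ Finset.powersetCard t (Finset.Icc 1 (s+t-1)),
      IsUpperLantern n s t A (Ls A))
    (hLt : ∀ A ∈ Finset.powersetCard (t-1) (Finset.Icc 1 (s+t-1)),
      IsLowerLantern n s t (insert (s+t) A) (Lt (insert (s+t) A)))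
    (F5 : Finset (Finset ℕ))
    (hF5sub : F5 ⊆ lanternG1 n s t ∪ lanternG2 s t)
    (hF5free : ¬ ContainsIndKst s t (lanternFam n s t Ls Lt ∪ F5))
    (hF5max : ∀ X ∈ lanternG1 n s t ∪ lanternG2 s t, X ∉ F5 →
      ContainsIndKst s t (lanternFam n s t Ls Lt ∪ insert X F5))
    (F : Finset ℕ) (hFsub : F ⊆ Finset.Icc 1 n)
    (hFnot : F ∉ lanternFam n s t Ls Lt ∪ F5)
    (hlow : 1 ≤ (F ∩ Finset.Icc 1 (s+t-1)).card)
    (hhigh : (F ∩ Finset.Icc 1 (s+t-1)).card ≤ t - 1) :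
    ContainsIndKst s t (insert F (lanternFam n s t Ls Lt ∪ F5)) :=
  stmt9_general n s t hts ht hn Ls Lt hLt F5 hF5max F hFsub hFnot hlow hhigh
end
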